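/- arXiv:2410.13012 — 3 statements merged into one kernel-verified Lean document; each statement's English description precedes it below -/
import Mathlib

section
/- Let f : ℕ → ℕ. Suppose that for every domain X' and every binary concept class H ⊆ {0,1}^{X'} with finite VC dimension d, there exists an exact realizable sample compression scheme for H of size at most f(d) that is either a proper compression scheme or a majority vote compression scheme. Then every multiclass concept class C ⊆ Y^X (where the label set Y may be infinite) with finite graph dimension d_G admits an exact realizable sample compression scheme of size at most f(d_G). -/
/-!
Pass to the graph class `{(x, y) ↦ [c x = y] : c ∈ C}` on `X × Y`, whose VC dimension is the graph
dimension of `C`, and compress the sample with every pair labelled `true`. A reconstruction that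
is a member of the graph class, or a majority vote of members, accepts at most one label at each
point: two labels accepted at `x` would each need more than half of the voters, yet no voter
accepts both. The multiclass prediction at `x` is that unique accepted label.
-/

universe u v

/-- A finite sample `S` is realizable by the concept class `C`. -/
def Realizable {X Y : Type*} (C : Set (X → Y)) (S : List (X × Y)) : Prop :=
  ∃ c ∈ C, ∀ p ∈ S, c p.1 = p.2

/-- `(κ, ρ)` is an exact realizable sample compression scheme for `C` of size at most `k`. -/
def IsExactRealizableScheme {X Y : Type*} (C : Set (X → Y)) (k : ℕ)
    (κ : List (X × Y) → List (X × Y) × List Bool)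
    (ρ : List (X × Y) × List Bool → X → Y) : Prop :=
  (∀ S : List (X × Y), (κ S).1 ⊆ S) ∧
  (∀ S : List (X × Y), Realizable C S → (κ S).1.length + (κ S).2.length ≤ k) ∧
  (∀ S : List (X × Y), Realizable C S → ∀ p ∈ S, ρ (κ S) p.1 = p.2)

/-- A proper compression scheme: on realizable samples the reconstruction
returns a concept of the class. -/
def IsProperScheme {X Y : Type*} (C : Set (X → Y))
    (κ : List (X × Y) → List (X × Y) × List Bool)
    (ρ : List (X × Y) × List Bool → X → Y) : Prop :=
  ∀ S : List (X × Y), Realizable C S → ρ (κ S) ∈ C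

/-- `g` is a majority vote of finitely many (a nonempty finite multiset of) concepts
from the binary class `H`, with ties broken toward `0` (majority is `1` iff strictly
more than half of the concepts output `1`). -/
def IsMajorityOf {X' : Type*} (H : Set (X' → Bool)) (g : X' → Bool) : Prop :=
  ∃ L : List (X' → Bool), L ≠ [] ∧ (∀ h ∈ L, h ∈ H) ∧
    ∀ x, g x = decide (L.length < 2 * L.countP (fun h => h x))

/-- A majority vote compression scheme for a binary class `H`. -/
def IsMajorityVoteScheme {X' : Type*} (H : Set (X' → Bool))
    (κ : List (X' × Bool) → List (X' × Bool) × List Bool)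
    (ρ : List (X' × Bool) × List Bool → X' → Bool) : Prop :=
  ∀ S : List (X' × Bool), Realizable H S → IsMajorityOf H (ρ (κ S))

/-- `n` points of `X` are shattered by the binary concept class `H ⊆ {0,1}^X`. -/
def ShattersN {X : Type*} (H : Set (X → Bool)) (n : ℕ) : Prop :=
  ∃ x : Fin n → X, ∀ b : Fin n → Bool, ∃ h ∈ H, ∀ i, h (x i) = b i

/-- `H` has (finite) VC dimension exactly `d`. -/
def IsVCDim {X : Type*} (H : Set (X → Bool)) (d : ℕ) : Prop :=
  ShattersN H d ∧ ¬ ShattersN H (d + 1)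

/-- `n` points of `X` are G-shattered by the multiclass concept class `C ⊆ Y^X`. -/
def GShattersN {X Y : Type*} (C : Set (X → Y)) (n : ℕ) : Prop :=
  ∃ (x : Fin n → X) (y : Fin n → Y),
    ∀ b : Fin n → Bool, ∃ c ∈ C, ∀ i, (c (x i) = y i ↔ b i = true)

/-- `C` has (finite) graph dimension exactly `d`. -/
def IsGraphDim {X Y : Type*} (C : Set (X → Y)) (d : ℕ) : Prop :=
  GShattersN C d ∧ ¬ GShattersN C (d + 1)

theorem List.countP_add_countP_le_length {α : Type*} {p q : α → Bool} {l : List α}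
    (h : ∀ a ∈ l, p a = true → q a = false) :
    l.countP p + l.countP q ≤ l.length := by
  have hq : l.countP q ≤ l.countP (fun a => decide ¬p a = true) :=
    List.countP_mono_left fun a ha hqa => by
      cases hpa : p a
      · simp
      · simp [h a ha hpa] at hqa
  rw [List.length_eq_countP_add_countP p]
  omega

theorem List.map_fst_map_pair_eq {α β : Type*} {L : List (α × β)} {S : List α} {b : β}
    (hL : L ⊆ S.map (·, b)) : (L.map Prod.fst).map (·, b) = L := by
  rw [List.map_map]
  conv_rhs => rw [← List.map_id' L]
  refine List.map_congr_left fun q hq => ?_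
  obtain ⟨p, -, rfl⟩ := List.mem_map.1 (hL hq)
  rfl

section GraphClass

variable {X Y : Type*}

open Classical in
def graphClass (C : Set (X → Y)) : Set (X × Y → Bool) :=
  (fun c p => decide (c p.1 = p.2)) '' C

theorem shattersN_graphClass_iff {C : Set (X → Y)} {n : ℕ} :
    ShattersN (graphClass C) n ↔ GShattersN C n := by
  constructor
  · rintro ⟨p, hp⟩
    refine ⟨fun i => (p i).1, fun i => (p i).2, fun b => ?_⟩
    obtain ⟨-, ⟨c, hc, rfl⟩, hcb⟩ := hp b
    exact ⟨c, hc, fun i => by simp [← hcb i]⟩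
  · rintro ⟨x, y, hxy⟩
    refine ⟨fun i => (x i, y i), fun b => ?_⟩
    obtain ⟨c, hc, hcb⟩ := hxy b
    exact ⟨_, ⟨c, hc, rfl⟩, fun i => by cases hb : b i <;> simpa [hb] using hcb i⟩

theorem IsGraphDim.isVCDim_graphClass {C : Set (X → Y)} {d : ℕ} (hC : IsGraphDim C d) :
    IsVCDim (graphClass C) d :=
  ⟨shattersN_graphClass_iff.2 hC.1, fun h => hC.2 (shattersN_graphClass_iff.1 h)⟩

theorem Realizable.graphClass_map_true {C : Set (X → Y)} {S : List (X × Y)}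
    (hS : Realizable C S) : Realizable (graphClass C) (S.map (·, true)) := by
  obtain ⟨c, hc, hcS⟩ := hS
  refine ⟨_, ⟨c, hc, rfl⟩, fun q hq => ?_⟩
  obtain ⟨p, hp, rfl⟩ := List.mem_map.1 hq
  simpa using hcS p hp

def IsSingleValued (g : X × Y → Bool) : Prop :=
  ∀ x y₁ y₂, g (x, y₁) = true → g (x, y₂) = true → y₁ = y₂

theorem isSingleValued_of_mem_graphClass {C : Set (X → Y)} {g : X × Y → Bool}
    (hg : g ∈ graphClass C) : IsSingleValued g := by
  obtain ⟨c, -, rfl⟩ := hg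
  intro x y₁ y₂ h₁ h₂
  simp only [decide_eq_true_eq] at h₁ h₂
  exact h₁ ▸ h₂

theorem IsMajorityOf.isSingleValued {H : Set (X × Y → Bool)} {g : X × Y → Bool}
    (hH : ∀ h ∈ H, IsSingleValued h) (hg : IsMajorityOf H g) : IsSingleValued g := by
  obtain ⟨L, -, hLH, hLg⟩ := hg
  intro x y₁ y₂ h₁ h₂
  by_contra hne
  have hdisj : ∀ h ∈ L, h (x, y₁) = true → h (x, y₂) = false := fun h hh h₁ =>
    Bool.eq_false_iff.2 fun h₂ => hne (hH h (hLH h hh) x y₁ y₂ h₁ h₂)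
  have hle := List.countP_add_countP_le_length hdisj
  rw [hLg, decide_eq_true_eq] at h₁ h₂
  omega

noncomputable def decodeGraph (g : X × Y → Bool) (c₀ : X → Y) (x : X) : Y :=
  open Classical in if h : ∃ y, g (x, y) = true then h.choose else c₀ x

theorem decodeGraph_eq {g : X × Y → Bool} (hg : IsSingleValued g) (c₀ : X → Y) {x : X} {y : Y}
    (hxy : g (x, y) = true) : decodeGraph g c₀ x = y := by
  have hex : ∃ y, g (x, y) = true := ⟨y, hxy⟩
  rw [decodeGraph, dif_pos hex]
  exact hg x _ y hex.choose_spec hxy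

theorem exists_isExactRealizableScheme_of_graphClass {C : Set (X → Y)} {k : ℕ}
    {κ' : List ((X × Y) × Bool) → List ((X × Y) × Bool) × List Bool}
    {ρ' : List ((X × Y) × Bool) × List Bool → X × Y → Bool}
    (hκρ : IsExactRealizableScheme (graphClass C) k κ' ρ')
    (hsv : ∀ S, Realizable (graphClass C) S → IsSingleValued (ρ' (κ' S))) (c₀ : X → Y) :
    ∃ κ ρ, IsExactRealizableScheme C k κ ρ := by
  obtain ⟨hsub, hsize, hexact⟩ := hκρ
  have hroundtrip (S : List (X × Y)) :
      (((κ' (S.map (·, true))).1.map Prod.fst).map (·, true), (κ' (S.map (·, true))).2) =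
        κ' (S.map (·, true)) := by
    rw [List.map_fst_map_pair_eq (hsub _)]
  refine ⟨fun S => ((κ' (S.map (·, true))).1.map Prod.fst, (κ' (S.map (·, true))).2),
    fun T => decodeGraph (ρ' (T.1.map (·, true), T.2)) c₀, fun S p hp => ?_,
    fun S hS => by simpa using hsize _ hS.graphClass_map_true, fun S hS p hp => ?_⟩
  · obtain ⟨q, hq, rfl⟩ := List.mem_map.1 hp
    obtain ⟨p, hpS, rfl⟩ := List.mem_map.1 (hsub _ hq)
    exact hpS
  · simp only [hroundtrip]
    exact decodeGraph_eq (hsv _ hS.graphClass_map_true) c₀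
      (hexact _ hS.graphClass_map_true (p, true) (List.mem_map_of_mem hp))

end GraphClass

/-- Multiclass reduction with proper / majority-vote binary compression schemes:
if every binary class of finite VC dimension `d` has an exact realizable compression
scheme of size at most `f d` that is proper or a majority vote scheme, then every
multiclass class (possibly infinite label set) with finite graph dimension `d_G`
admits an exact realizable compression scheme of size at most `f d_G`. -/
theorem multiclass_compression_of_proper_or_majority {X : Type u} {Y : Type v}
    (f : ℕ → ℕ)
    (hbin : ∀ (X' : Type (max u v)) (H : Set (X' → Bool)) (d : ℕ), IsVCDim H d →
      ∃ κ ρ, IsExactRealizableScheme H (f d) κ ρ ∧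
        (IsProperScheme H κ ρ ∨ IsMajorityVoteScheme H κ ρ))
    (C : Set (X → Y)) (dG : ℕ) (hC : IsGraphDim C dG) :
    ∃ κ ρ, IsExactRealizableScheme C (f dG) κ ρ := by
  obtain ⟨κ', ρ', hκρ, hkind⟩ := hbin (X × Y) (graphClass C) dG hC.isVCDim_graphClass
  have hsv : ∀ S, Realizable (graphClass C) S → IsSingleValued (ρ' (κ' S)) := by
    rcases hkind with hproper | hmajority
    · exact fun S hS => isSingleValued_of_mem_graphClass (hproper S hS)
    · exact fun S hS => (hmajority S hS).isSingleValued fun _ => isSingleValued_of_mem_graphClass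
  obtain ⟨_, _, hG⟩ := hC.1
  obtain ⟨c₀, -, -⟩ := hG fun _ => true
  exact exists_isExactRealizableScheme_of_graphClass hκρ hsv c₀
end

section
/- Let f : ℕ → ℕ. Suppose that for every domain X' and every binary concept class H ⊆ {0,1}^{X'} with finite VC dimension d, there exists an exact realizable sample compression scheme for H of size at most f(d) that is either a proper compression scheme or a majority vote compression scheme. Then there is a universal constant c > 0 such that for every class C ⊆ [0,1]^X with finite pseudo-dimension d_P, every ε ∈ (0,1), and every p ∈ [1,∞], there exists an ε-approximate realizable compression scheme for C with respect to the ℓ_p loss of size at most c·f(d_P). -/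
universe u

/-- `n` points of `X` are P-shattered by the real-valued class `C ⊆ [0,1]^X`. -/
def PShattersN {X : Type*} (C : Set (X → ℝ)) (n : ℕ) : Prop :=
  ∃ (x : Fin n → X) (y : Fin n → ℝ), (∀ i, y i ∈ Set.Icc (0:ℝ) 1) ∧
    ∀ b : Fin n → Bool, ∃ c ∈ C, ∀ i, (c (x i) ≤ y i ↔ b i = true)

/-- `C` has (finite) pseudo-dimension exactly `d`. -/
def IsPseudoDim {X : Type*} (C : Set (X → ℝ)) (d : ℕ) : Prop :=
  PShattersN C d ∧ ¬ PShattersN C (d + 1)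

/-- An `ε`-approximate realizable `ℓ_∞` compression scheme for `C ⊆ [0,1]^X`
of size at most `k`. -/
def IsApproxLinfScheme {X : Type*} (C : Set (X → ℝ)) (k : ℕ) (ε : ℝ)
    (κ : List (X × ℝ) → List (X × ℝ) × List Bool)
    (ρ : List (X × ℝ) × List Bool → X → ℝ) : Prop :=
  (∀ S : List (X × ℝ), (κ S).1 ⊆ S) ∧
  (∀ T x, ρ T x ∈ Set.Icc (0:ℝ) 1) ∧
  (∀ S : List (X × ℝ), Realizable C S → (κ S).1.length + (κ S).2.length ≤ k) ∧
  (∀ S : List (X × ℝ), Realizable C S → ∀ p ∈ S, |ρ (κ S) p.1 - p.2| ≤ ε)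

/-- An `ε`-approximate realizable `ℓ_p` compression scheme for `C ⊆ [0,1]^X`
of size at most `k`. -/
def IsApproxLpScheme {X : Type*} (C : Set (X → ℝ)) (k : ℕ) (p ε : ℝ)
    (κ : List (X × ℝ) → List (X × ℝ) × List Bool)
    (ρ : List (X × ℝ) × List Bool → X → ℝ) : Prop :=
  (∀ S : List (X × ℝ), (κ S).1 ⊆ S) ∧
  (∀ T x, ρ T x ∈ Set.Icc (0:ℝ) 1) ∧
  (∀ S : List (X × ℝ), Realizable C S → (κ S).1.length + (κ S).2.length ≤ k) ∧
  (∀ S : List (X × ℝ), Realizable C S →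
    (S.map (fun q => |ρ (κ S) q.1 - q.2| ^ p)).sum ≤ ε * S.length)

/-!
A real-valued class `C` is reduced to its binary subgraph class `{(x, t) ↦ [c x ≤ t]}`,
whose VC dimension is the pseudo-dimension of `C`. A real sample `(x, y)` is encoded by the two
binary examples `((x, y), 1)` and `((x, y - ε), 0)`; the binary scheme compresses the encoding,
and the bits record which compressed points were shifted by `ε`. A proper or majority vote
reconstruction is monotone in the threshold `t`, so the infimum of the thresholds it labels `1`
lies in `[y - ε, y]`, which gives an `ℓ_∞` error `ε` and hence an `ℓ_p` error `ε ^ p ≤ ε`.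
-/

open Set

variable {X : Type*}

section Subgraph

def subgraphClass (C : Set (X → ℝ)) : Set (X × ℝ → Bool) :=
  (fun c q => decide (c q.1 ≤ q.2)) '' C

variable {C : Set (X → ℝ)}

theorem shattersN_subgraphClass {n : ℕ} (h : PShattersN C n) :
    ShattersN (subgraphClass C) n := by
  obtain ⟨x, y, -, hsh⟩ := h
  refine ⟨fun i => (x i, y i), fun b => ?_⟩
  obtain ⟨c, hc, hcb⟩ := hsh b
  exact ⟨_, ⟨c, hc, rfl⟩, fun i => by simpa using Bool.eq_iff_iff.mpr (by simpa using hcb i)⟩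

theorem pShattersN_of_shattersN_subgraphClass (hC : ∀ g ∈ C, ∀ x, g x ∈ Icc (0 : ℝ) 1)
    {n : ℕ} (h : ShattersN (subgraphClass C) n) : PShattersN C n := by
  obtain ⟨z, hz⟩ := h
  refine ⟨fun i => (z i).1, fun i => (z i).2, fun i => ?_, fun b => ?_⟩
  · obtain ⟨_, ⟨c₁, hc₁, rfl⟩, h₁⟩ := hz fun _ => true
    obtain ⟨_, ⟨c₀, hc₀, rfl⟩, h₀⟩ := hz fun _ => false
    have le₁ : c₁ (z i).1 ≤ (z i).2 := by simpa using h₁ i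
    have lt₀ : (z i).2 < c₀ (z i).1 := by simpa using h₀ i
    exact ⟨(hC c₁ hc₁ _).1.trans le₁, lt₀.le.trans (hC c₀ hc₀ _).2⟩
  · obtain ⟨_, ⟨c, hc, rfl⟩, hcb⟩ := hz b
    exact ⟨c, hc, fun i => by simp [← hcb i]⟩

theorem isVCDim_subgraphClass (hC : ∀ g ∈ C, ∀ x, g x ∈ Icc (0 : ℝ) 1) {d : ℕ}
    (h : IsPseudoDim C d) : IsVCDim (subgraphClass C) d :=
  ⟨shattersN_subgraphClass h.1, fun h' => h.2 (pShattersN_of_shattersN_subgraphClass hC h')⟩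

end Subgraph

section Monotone

def IsThresholdMonotone (g : X × ℝ → Bool) : Prop :=
  ∀ x, Monotone fun t => g (x, t)

theorem isThresholdMonotone_of_mem_subgraphClass {C : Set (X → ℝ)} {g : X × ℝ → Bool}
    (hg : g ∈ subgraphClass C) : IsThresholdMonotone g := by
  obtain ⟨c, -, rfl⟩ := hg
  intro x t t' htt'
  simpa [Bool.le_iff_imp] using fun h => h.trans htt'

theorem IsMajorityOf.isThresholdMonotone {H : Set (X × ℝ → Bool)}
    (hH : ∀ h ∈ H, IsThresholdMonotone h) {g : X × ℝ → Bool} (hg : IsMajorityOf H g) :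
    IsThresholdMonotone g := by
  obtain ⟨L, -, hLH, hgL⟩ := hg
  intro x t t' htt'
  simp only [hgL, Bool.le_iff_imp, decide_eq_true_eq]
  refine fun hmaj => hmaj.trans_le (Nat.mul_le_mul_left 2 (List.countP_mono_left ?_))
  exact fun h hL => Bool.le_iff_imp.mp (hH h (hLH h hL) x htt')

theorem isThresholdMonotone_of_proper_or_majority {C : Set (X → ℝ)}
    {κ : List ((X × ℝ) × Bool) → List ((X × ℝ) × Bool) × List Bool}
    {ρ : List ((X × ℝ) × Bool) × List Bool → X × ℝ → Bool}
    (h : IsProperScheme (subgraphClass C) κ ρ ∨ IsMajorityVoteScheme (subgraphClass C) κ ρ)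
    {S : List ((X × ℝ) × Bool)} (hS : Realizable (subgraphClass C) S) :
    IsThresholdMonotone (ρ (κ S)) := by
  rcases h with hproper | hmajority
  · exact isThresholdMonotone_of_mem_subgraphClass (hproper S hS)
  · exact (hmajority S hS).isThresholdMonotone fun _ => isThresholdMonotone_of_mem_subgraphClass

end Monotone

section Threshold

noncomputable def thresholdInf (g : X × ℝ → Bool) (x : X) : ℝ :=
  sInf {t ∈ Icc (0 : ℝ) 1 | g (x, t) = true}

theorem thresholdInf_mem_Icc (g : X × ℝ → Bool) (x : X) : thresholdInf g x ∈ Icc (0 : ℝ) 1 := by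
  refine ⟨Real.sInf_nonneg fun t ht => ht.1.1, ?_⟩
  rcases Set.eq_empty_or_nonempty {t ∈ Icc (0 : ℝ) 1 | g (x, t) = true} with hempty | ⟨t, ht⟩
  · rw [thresholdInf, hempty, Real.sInf_empty]
    exact zero_le_one
  · exact (csInf_le ⟨0, fun u hu => hu.1.1⟩ ht).trans ht.1.2

theorem abs_thresholdInf_sub_le {g : X × ℝ → Bool} {x : X} {y ε : ℝ}
    (hg : Monotone fun t => g (x, t)) (hy : y ∈ Icc (0 : ℝ) 1)
    (hpos : g (x, y) = true) (hneg : g (x, y - ε) = false) :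
    |thresholdInf g x - y| ≤ ε := by
  have hmem : y ∈ {t ∈ Icc (0 : ℝ) 1 | g (x, t) = true} := ⟨hy, hpos⟩
  have hupper : thresholdInf g x ≤ y := csInf_le ⟨0, fun u hu => hu.1.1⟩ hmem
  have hlower : y - ε ≤ thresholdInf g x := by
    refine le_csInf ⟨y, hmem⟩ fun t ht => le_of_not_gt fun hlt => ?_
    have := Bool.le_iff_imp.mp (hg hlt.le) ht.2
    simp [hneg] at this
  rw [abs_le]
  constructor <;> linarith

end Threshold

section Lift

variable (ε : ℝ)

def subgraphEncode (S : List (X × ℝ)) : List ((X × ℝ) × Bool) :=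
  S.flatMap fun p => [(p, true), ((p.1, p.2 - ε), false)]

def liftCompress (κb : List ((X × ℝ) × Bool) → List ((X × ℝ) × Bool) × List Bool)
    (S : List (X × ℝ)) : List (X × ℝ) × List Bool :=
  let B := κb (subgraphEncode ε S)
  (B.1.map fun q => (q.1.1, if q.2 then q.1.2 else q.1.2 + ε), B.2 ++ B.1.map Prod.snd)

def subgraphDecode (T : List (X × ℝ) × List Bool) : List ((X × ℝ) × Bool) × List Bool :=
  let m := T.2.length - T.1.length
  ((T.1.zip (T.2.drop m)).map fun q => ((q.1.1, if q.2 then q.1.2 else q.1.2 - ε), q.2),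
   T.2.take m)

noncomputable def liftReconstruct (ρb : List ((X × ℝ) × Bool) × List Bool → X × ℝ → Bool)
    (T : List (X × ℝ) × List Bool) : X → ℝ :=
  thresholdInf (ρb (subgraphDecode ε T))

variable {ε}

theorem subgraphDecode_liftCompress
    (κb : List ((X × ℝ) × Bool) → List ((X × ℝ) × Bool) × List Bool) (S : List (X × ℝ)) :
    subgraphDecode ε (liftCompress ε κb S) = κb (subgraphEncode ε S) := by
  simp only [subgraphDecode, liftCompress]
  obtain ⟨M, bits⟩ := κb (subgraphEncode ε S)
  simp only [List.length_map, List.length_append,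
    Nat.add_sub_cancel, List.drop_left, List.take_left, List.zip_map', List.map_map]
  congr 1
  conv_rhs => rw [← List.map_id M]
  refine List.map_congr_left fun ⟨⟨x, t⟩, b⟩ _ => ?_
  cases b <;> simp

theorem liftCompress_subset
    {κb : List ((X × ℝ) × Bool) → List ((X × ℝ) × Bool) × List Bool}
    (hκb : ∀ S, (κb S).1 ⊆ S) (S : List (X × ℝ)) : (liftCompress ε κb S).1 ⊆ S := by
  intro q hq
  obtain ⟨q₀, hq₀, rfl⟩ := List.mem_map.mp hq
  obtain ⟨p, hp, hmem⟩ := List.mem_flatMap.mp (hκb _ hq₀)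
  simp only [List.mem_cons, List.not_mem_nil, or_false] at hmem
  rcases hmem with rfl | rfl <;> simpa using hp

theorem liftCompress_size_le
    {κb : List ((X × ℝ) × Bool) → List ((X × ℝ) × Bool) × List Bool} {k : ℕ} {S : List (X × ℝ)}
    (h : (κb (subgraphEncode ε S)).1.length + (κb (subgraphEncode ε S)).2.length ≤ k) :
    (liftCompress ε κb S).1.length + (liftCompress ε κb S).2.length ≤ 2 * k := by
  simp only [liftCompress, List.length_map, List.length_append]
  omega

theorem mem_subgraphEncode_pos {S : List (X × ℝ)} {p : X × ℝ} (hp : p ∈ S) :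
    (p, true) ∈ subgraphEncode ε S :=
  List.mem_flatMap.mpr ⟨p, hp, by simp⟩

theorem mem_subgraphEncode_neg {S : List (X × ℝ)} {p : X × ℝ} (hp : p ∈ S) :
    ((p.1, p.2 - ε), false) ∈ subgraphEncode ε S :=
  List.mem_flatMap.mpr ⟨p, hp, by simp⟩

theorem Realizable.subgraphEncode {C : Set (X → ℝ)} {S : List (X × ℝ)} (hS : Realizable C S)
    (hε : 0 < ε) : Realizable (subgraphClass C) (subgraphEncode ε S) := by
  obtain ⟨c, hc, hcS⟩ := hS
  refine ⟨_, ⟨c, hc, rfl⟩, fun q hq => ?_⟩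
  obtain ⟨p, hp, hmem⟩ := List.mem_flatMap.mp hq
  simp only [List.mem_cons, List.not_mem_nil, or_false] at hmem
  rcases hmem with rfl | rfl <;> simp [hcS p hp, hε]

theorem isApproxLinfScheme_lift {C : Set (X → ℝ)} (hC : ∀ g ∈ C, ∀ x, g x ∈ Icc (0 : ℝ) 1)
    (hε : 0 < ε) {k : ℕ}
    {κb : List ((X × ℝ) × Bool) → List ((X × ℝ) × Bool) × List Bool}
    {ρb : List ((X × ℝ) × Bool) × List Bool → X × ℝ → Bool}
    (hscheme : IsExactRealizableScheme (subgraphClass C) k κb ρb)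
    (hmono : ∀ S, Realizable (subgraphClass C) S → IsThresholdMonotone (ρb (κb S))) :
    IsApproxLinfScheme C (2 * k) ε (liftCompress ε κb) (liftReconstruct ε ρb) := by
  obtain ⟨hsub, hsize, hexact⟩ := hscheme
  refine ⟨liftCompress_subset hsub, fun T => thresholdInf_mem_Icc _,
    fun S hS => liftCompress_size_le (hsize _ (hS.subgraphEncode hε)), fun S hS p hp => ?_⟩
  have hB := hS.subgraphEncode hε
  obtain ⟨c, hc, hcS⟩ := hS
  rw [liftReconstruct, subgraphDecode_liftCompress]
  exact abs_thresholdInf_sub_le (hmono _ hB p.1) (hcS p hp ▸ hC c hc p.1)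
    (hexact _ hB _ (mem_subgraphEncode_pos hp)) (hexact _ hB _ (mem_subgraphEncode_neg hp))

end Lift

theorem IsApproxLinfScheme.isApproxLpScheme {C : Set (X → ℝ)} {k : ℕ} {ε p : ℝ}
    {κ : List (X × ℝ) → List (X × ℝ) × List Bool} {ρ : List (X × ℝ) × List Bool → X → ℝ}
    (h : IsApproxLinfScheme C k ε κ ρ) (hε₀ : 0 < ε) (hε₁ : ε ≤ 1) (hp : 1 ≤ p) :
    IsApproxLpScheme C k p ε κ ρ := by
  obtain ⟨hsub, hrange, hsize, herr⟩ := h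
  refine ⟨hsub, hrange, hsize, fun S hS => ?_⟩
  have hterm : ∀ q ∈ S, |ρ (κ S) q.1 - q.2| ^ p ≤ ε := fun q hq =>
    calc |ρ (κ S) q.1 - q.2| ^ p ≤ ε ^ p :=
          Real.rpow_le_rpow (abs_nonneg _) (herr S hS q hq) (by linarith)
      _ ≤ ε ^ (1 : ℝ) := Real.rpow_le_rpow_of_exponent_ge hε₀ hε₁ hp
      _ = ε := Real.rpow_one ε
  calc (S.map fun q => |ρ (κ S) q.1 - q.2| ^ p).sum
      ≤ (S.map fun q => |ρ (κ S) q.1 - q.2| ^ p).length • ε :=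
        List.sum_le_card_nsmul _ _ fun _ hx => by
          obtain ⟨q, hq, rfl⟩ := List.mem_map.mp hx
          exact hterm q hq
    _ = ε * S.length := by rw [List.length_map, nsmul_eq_mul, mul_comm]

/-- Regression reduction with proper / majority-vote binary compression schemes:
if every binary class of finite VC dimension `d` has an exact realizable compression
scheme of size at most `f d` that is proper or a majority vote scheme, then there is a
universal constant `c > 0` such that every class `C ⊆ [0,1]^X` of finite
pseudo-dimension `d_P` admits, for every `ε ∈ (0,1)` and every `p ∈ [1,∞]`
(the `ℓ_∞` case stated separately), an `ε`-approximate realizable `ℓ_p` scheme of size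
at most `c·f(d_P)`. -/
theorem regression_approx_compression_of_proper_or_majority (f : ℕ → ℕ)
    (hbin : ∀ (X' : Type u) (H : Set (X' → Bool)) (d : ℕ), IsVCDim H d →
      ∃ κ ρ, IsExactRealizableScheme H (f d) κ ρ ∧
        (IsProperScheme H κ ρ ∨ IsMajorityVoteScheme H κ ρ)) :
    ∃ c : ℝ, 0 < c ∧
      ∀ (X : Type u) (C : Set (X → ℝ)),
        (∀ g ∈ C, ∀ x, g x ∈ Set.Icc (0:ℝ) 1) →
        ∀ dP : ℕ, IsPseudoDim C dP →
        ∀ ε : ℝ, 0 < ε → ε < 1 →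
          (∃ k : ℕ, (k : ℝ) ≤ c * f dP ∧ ∃ κ ρ, IsApproxLinfScheme C k ε κ ρ) ∧
          (∀ p : ℝ, 1 ≤ p →
            ∃ k : ℕ, (k : ℝ) ≤ c * f dP ∧ ∃ κ ρ, IsApproxLpScheme C k p ε κ ρ) := by
  refine ⟨2, two_pos, fun X C hC dP hdP ε hε₀ hε₁ => ?_⟩
  obtain ⟨κb, ρb, hscheme, hkind⟩ := hbin (X × ℝ) _ dP (isVCDim_subgraphClass hC hdP)
  have hlinf := isApproxLinfScheme_lift hC hε₀ hscheme
    fun _ hS => isThresholdMonotone_of_proper_or_majority hkind hS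
  have hsize : ((2 * f dP : ℕ) : ℝ) ≤ 2 * f dP := by push_cast; rfl
  exact ⟨⟨_, hsize, _, _, hlinf⟩,
    fun p hp => ⟨_, hsize, _, _, hlinf.isApproxLpScheme hε₀ hε₁.le hp⟩⟩
end

section
/- Every binary concept class C ⊆ {0,1}^X with finite Littlestone dimension d_LD admits an infinitized sample compression scheme of size at most d_LD (the compression set consists of at most d_LD labeled examples and no side-information bits). -/
universe u

/-- A (possibly infinite) sample `S` is realizable by the concept class `C`. -/
def RealizableSet {X Y : Type*} (C : Set (X → Y)) (S : Set (X × Y)) : Prop :=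
  ∃ c ∈ C, ∀ p ∈ S, c p.1 = p.2

/-- `(κ, ρ)` is an infinitized sample compression scheme for `C` of size at most `k`:
`κ` maps any (possibly infinite) sample to a finite subsample together with a finite
bitstring of total length at most `k` (on realizable samples), and `ρ` reconstructs a
predictor consistent with the whole sample. -/
def IsInfinitizedScheme {X Y : Type*} (C : Set (X → Y)) (k : ℕ)
    (κ : Set (X × Y) → List (X × Y) × List Bool)
    (ρ : List (X × Y) × List Bool → X → Y) : Prop :=
  (∀ S : Set (X × Y), ∀ p ∈ (κ S).1, p ∈ S) ∧
  (∀ S : Set (X × Y), RealizableSet C S → (κ S).1.length + (κ S).2.length ≤ k) ∧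
  (∀ S : Set (X × Y), RealizableSet C S → ∀ p ∈ S, ρ (κ S) p.1 = p.2)

/-- A Littlestone tree of depth `n` for the binary class `C` is shattered: defined
recursively on version spaces. `LShattersN 0 C` holds iff `C` is nonempty, and
`LShattersN (n+1) C` holds iff there is a point `x` such that both restrictions of `C`
(forcing `c x = 0` resp. `c x = 1`) shatter a tree of depth `n`. -/
def LShattersN {X : Type*} : ℕ → Set (X → Bool) → Prop
  | 0, C => C.Nonempty
  | n + 1, C => ∃ x : X,
      LShattersN n {c ∈ C | c x = false} ∧ LShattersN n {c ∈ C | c x = true}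

/-- `C` has (finite) Littlestone dimension exactly `d`. -/
def IsLittlestoneDim {X : Type*} (C : Set (X → Bool)) (d : ℕ) : Prop :=
  LShattersN d C ∧ ¬ LShattersN (d + 1) C

/-! The compression set is a sequence of mistakes of the Standard Optimal Algorithm, which
predicts `1` at `x` exactly when the concepts labelling `x` by `1` still shatter a tree of the
current depth budget. If the class shatters no tree of depth `n + 1`, a mistake at budget `n`
leaves a version space shattering no tree of depth `n`; so after at most `d` recorded mistakes
the algorithm, rerun on the restricted class with the remaining budget, is correct on the
whole sample (at budget `0` a mistake would leave an empty version space, contradicting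
realizability). -/

section Compression

variable {X : Type*}

def restrict (C : Set (X → Bool)) (p : X × Bool) : Set (X → Bool) :=
  {c ∈ C | c p.1 = p.2}

open Classical in
/-- The Standard Optimal Algorithm with depth budget `n`. -/
noncomputable def soa (n : ℕ) (C : Set (X → Bool)) (x : X) : Bool :=
  decide (LShattersN n (restrict C (x, true)))

lemma soa_eq_true_iff {n : ℕ} {C : Set (X → Bool)} {x : X} :
    soa n C x = true ↔ LShattersN n (restrict C (x, true)) := by
  classical
  exact decide_eq_true_iff

lemma not_lShattersN_restrict_of_soa_ne {n : ℕ} {C : Set (X → Bool)} {x : X} {b : Bool}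
    (hC : ¬ LShattersN (n + 1) C) (hb : soa n C x ≠ b) :
    ¬ LShattersN n (restrict C (x, b)) := by
  cases b with
  | true => rwa [Ne, soa_eq_true_iff] at hb
  | false =>
    have htrue : LShattersN n (restrict C (x, true)) := by
      rwa [Ne, Bool.not_eq_false, soa_eq_true_iff] at hb
    exact fun hfalse => hC ⟨x, hfalse, htrue⟩

lemma RealizableSet.restrict {C : Set (X → Bool)} {S : Set (X × Bool)}
    (hS : RealizableSet C S) {p : X × Bool} (hp : p ∈ S) :
    RealizableSet (restrict C p) S := by
  obtain ⟨c, hcC, hc⟩ := hS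
  exact ⟨c, ⟨hcC, hc p hp⟩, hc⟩

lemma soa_zero_eq_of_realizable {C : Set (X → Bool)} {S : Set (X × Bool)}
    (hC : ¬ LShattersN 1 C) (hS : RealizableSet C S) {p : X × Bool} (hp : p ∈ S) :
    soa 0 C p.1 = p.2 := by
  by_contra hne
  obtain ⟨c, hc, -⟩ := hS.restrict hp
  exact not_lShattersN_restrict_of_soa_ne hC hne ⟨c, hc⟩

open Classical in
noncomputable def compress : ℕ → Set (X → Bool) → Set (X × Bool) → List (X × Bool)
  | 0, _, _ => []
  | n + 1, C, S =>
    if h : ∃ p ∈ S, soa (n + 1) C p.1 ≠ p.2 then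
      h.choose :: compress n (restrict C h.choose) S
    else []

noncomputable def reconstruct : ℕ → Set (X → Bool) → List (X × Bool) → X → Bool
  | n + 1, C, p :: l => reconstruct n (restrict C p) l
  | n, C, _ => soa n C

lemma mem_of_mem_compress {n : ℕ} {C : Set (X → Bool)} {S : Set (X × Bool)} {p : X × Bool}
    (hp : p ∈ compress n C S) : p ∈ S := by
  induction n generalizing C with
  | zero => simp [compress] at hp
  | succ n ih =>
    rw [compress] at hp
    split_ifs at hp with h
    · rcases List.mem_cons.mp hp with rfl | hp
      exacts [h.choose_spec.1, ih hp]
    · simp at hp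

lemma length_compress_le (n : ℕ) (C : Set (X → Bool)) (S : Set (X × Bool)) :
    (compress n C S).length ≤ n := by
  induction n generalizing C with
  | zero => simp [compress]
  | succ n ih =>
    rw [compress]
    split_ifs
    · simpa using ih _
    · simp

lemma reconstruct_compress {n : ℕ} {C : Set (X → Bool)} {S : Set (X × Bool)}
    (hC : ¬ LShattersN (n + 1) C) (hS : RealizableSet C S) {p : X × Bool} (hp : p ∈ S) :
    reconstruct n C (compress n C S) p.1 = p.2 := by
  induction n generalizing C with
  | zero => exact soa_zero_eq_of_realizable hC hS hp
  | succ n ih =>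
    rw [compress]
    split_ifs with h
    · obtain ⟨hqS, hq⟩ := h.choose_spec
      exact ih (not_lShattersN_restrict_of_soa_ne hC hq) (hS.restrict hqS)
    · exact not_not.mp fun hne => h ⟨p, hp, hne⟩

end Compression

/-- Every binary concept class of finite Littlestone dimension `d_LD` admits an
infinitized sample compression scheme of size at most `d_LD`, whose compression set
consists of at most `d_LD` labeled examples and no side-information bits. -/
theorem infinitized_compression_of_littlestone {X : Type u}
    (C : Set (X → Bool)) (d : ℕ) (hC : IsLittlestoneDim C d) :
    ∃ (κ : Set (X × Bool) → List (X × Bool) × List Bool)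
      (ρ : List (X × Bool) × List Bool → X → Bool),
      IsInfinitizedScheme C d κ ρ ∧
      (∀ S : Set (X × Bool), RealizableSet C S → (κ S).2 = []) := by
  refine ⟨fun S => (compress d C S, []), fun q => reconstruct d C q.1,
    ⟨fun S _ => mem_of_mem_compress, fun S _ => ?_, fun S hS _ => reconstruct_compress hC.2 hS⟩,
    fun S _ => rfl⟩
  simpa using length_compress_le d C S
end
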